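/- Let X be a finite metric space partitioned into m ≥ 1 pairwise disjoint groups X_1,…,X_m, let k_1,…,k_m ≥ 1 with k = k_1+⋯+k_m ≥ 2, and let μ > 0. Suppose: S_0 ⊆ X is μ-separated with |S_0| = k; and for each i ∈ {1,…,m}, S_i ⊆ X_i is μ-separated with k_i ≤ |S_i| ≤ k and such that if |S_i| < k then every x ∈ X_i satisfies d(x, S_i) < μ. Let P = S_0 ∪ S_1 ∪ ⋯ ∪ S_m and consider the chain relation ~ on P with threshold τ = μ/(m+1). If there exists a fair subset T ⊆ X with div(T) ≥ ((3m+2)/(m+1)) · μ, then there exists a set S ⊆ P with |S ∩ X_i| = k_i for every i ∈ {1,…,m} such that no two distinct elements of S are ~-related; consequently S is fair, |S| = k, and div(S) ≥ μ/(m+1). (Lemma 4: existence of a size-k common independent set of the fairness partition matroid and the cluster partition matroid.) -/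

import Mathlib

open Finset

variable {α : Type*} [MetricSpace α] [DecidableEq α]

/-- A finite set `S` is `μ`-separated if `d(x,y) ≥ μ` for all distinct `x, y ∈ S`. -/
def Separated (μ : ℝ) (S : Finset α) : Prop :=
  ∀ x ∈ S, ∀ y ∈ S, x ≠ y → μ ≤ dist x y

/-- Max–min diversity of a finite set: the minimum pairwise distance over distinct pairs. -/
noncomputable def divers (S : Finset α) : ℝ :=
  sInf {r : ℝ | ∃ x ∈ S, ∃ y ∈ S, x ≠ y ∧ dist x y = r}

/-- Distance from a point to a (nonempty) finite set: `d(y,S) = min_{s ∈ S} d(y,s)`. -/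
noncomputable def setDist (y : α) (S : Finset α) : ℝ :=
  sInf {r : ℝ | ∃ s ∈ S, dist y s = r}

/-- Minimum pairwise distance over distinct pairs of `X`. -/
noncomputable def dMin (X : Finset α) : ℝ :=
  sInf {r : ℝ | ∃ x ∈ X, ∃ y ∈ X, x ≠ y ∧ dist x y = r}

/-- Maximum pairwise distance over distinct pairs of `X`. -/
noncomputable def dMax (X : Finset α) : ℝ :=
  sSup {r : ℝ | ∃ x ∈ X, ∃ y ∈ X, x ≠ y ∧ dist x y = r}

/-- The geometric grid of guesses `U = { d_min/(1-ε)^j : j ∈ ℕ } ∩ [d_min, d_max]`. -/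
def grid (X : Finset α) (ε : ℝ) : Set ℝ :=
  {μ | (∃ j : ℕ, μ = dMin X / (1 - ε) ^ j) ∧ dMin X ≤ μ ∧ μ ≤ dMax X}

/-- A greedy candidate on ground set `Y` with threshold `μ` and capacity `c`:
`S ⊆ Y`, `S` is `μ`-separated, `|S| ≤ c`, and if `|S| < c` then every `y ∈ Y`
satisfies `d(y,S) < μ` (i.e., has some element of `S` within distance `< μ`). -/
def GreedyCandidate (μ : ℝ) (c : ℕ) (Y S : Finset α) : Prop :=
  S ⊆ Y ∧ Separated μ S ∧ S.card ≤ c ∧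
    (S.card < c → ∀ y ∈ Y, ∃ s ∈ S, dist y s < μ)

/-- `OPT`: the maximum of `div(T)` over all `k`-element subsets `T ⊆ X`. -/
noncomputable def OPTk (X : Finset α) (k : ℕ) : ℝ :=
  sSup {r : ℝ | ∃ T ⊆ X, T.card = k ∧ divers T = r}

/-- `OPT_f`: the maximum of `div(S)` over all fair subsets `S ⊆ X`
(those with `|S ∩ X_i| = k_i` for every group `i`). -/
noncomputable def OPTf (X : Finset α) {m : ℕ} (Xg : Fin m → Finset α) (kg : Fin m → ℕ) : ℝ :=
  sSup {r : ℝ | ∃ S ⊆ X, (∀ i, (S ∩ Xg i).card = kg i) ∧ divers S = r}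

/-- The chain relation on `P` with threshold `τ`: the reflexive–transitive closure of
"both points are in `P` and their distance is `< τ`". -/
def ChainRel (P : Finset α) (τ : ℝ) : α → α → Prop :=
  Relation.ReflTransGen (fun x y => x ∈ P ∧ y ∈ P ∧ dist x y < τ)

/-! Every point of `P` lies in one of the `m + 1` μ-separated sets `S₀, S₁, …, S_m`. On a simple
chain two points at most `m + 1` steps apart are closer than `(m + 1) τ = μ`, hence lie in different
sets; by pigeonhole a simple chain has at most `m` steps, so chain-related points are within
`m τ = μ - τ`. Therefore each `Sᵢ` meets every chain class at most once, and the points of `Sᵢ`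
within `μ` of two distinct points of `T` (which are `2μ + mτ` apart) lie in different classes.
Hall's theorem now assigns to the points of `T` distinct classes, each represented in the `Sᵢ` of the
point's own group: a group with `|Sᵢ| ≥ k` offers `k` classes, and in the other groups every point of
`T` has a point of `Sᵢ` within `μ`. These representatives form `S`. -/

section Metric

omit [DecidableEq α]

theorem divers_le_dist {S : Finset α} {x y : α} (hx : x ∈ S) (hy : y ∈ S) (hxy : x ≠ y) :
    divers S ≤ dist x y :=
  csInf_le ⟨0, by rintro r ⟨a, -, b, -, -, rfl⟩; exact dist_nonneg⟩ ⟨x, hx, y, hy, hxy, rfl⟩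

theorem le_divers {S : Finset α} {r : ℝ} (hS : 1 < #S)
    (h : ∀ x ∈ S, ∀ y ∈ S, x ≠ y → r ≤ dist x y) : r ≤ divers S := by
  obtain ⟨x, hx, y, hy, hxy⟩ := one_lt_card.1 hS
  exact le_csInf ⟨_, x, hx, y, hy, hxy, rfl⟩ fun _ ⟨a, ha, b, hb, hab, hr⟩ => hr ▸ h a ha b hb hab

theorem dist_getVert_lt {V : Type*} [PseudoMetricSpace V] {G : SimpleGraph V}
    {τ : ℝ} (hG : ∀ x y, G.Adj x y → dist x y < τ) {u v : V} (p : G.Walk u v) {i j : ℕ}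
    (hij : i < j) (hj : j ≤ p.length) :
    dist (p.getVert i) (p.getVert j) < (j - i) * τ := by
  induction j, hij using Nat.le_induction with
  | base => simpa using hG _ _ (p.adj_getVert_succ hj)
  | succ j hij ih =>
    calc dist (p.getVert i) (p.getVert (j + 1))
        ≤ dist (p.getVert i) (p.getVert j) + dist (p.getVert j) (p.getVert (j + 1)) :=
          dist_triangle _ _ _
      _ < (j - i) * τ + τ := add_lt_add (ih (by omega)) (hG _ _ (p.adj_getVert_succ hj))
      _ = ((j + 1 : ℕ) - i) * τ := by push_cast; ring

theorem dist_le_length_mul {V : Type*} [PseudoMetricSpace V] {G : SimpleGraph V} {τ : ℝ}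
    (hG : ∀ x y, G.Adj x y → dist x y < τ) {u v : V} (p : G.Walk u v) :
    dist u v ≤ p.length * τ := by
  rcases Nat.eq_zero_or_pos p.length with h | h
  · rw [h, Nat.cast_zero, zero_mul, p.eq_of_length_eq_zero h, dist_self]
  · simpa [p.getVert_zero, p.getVert_length] using (dist_getVert_lt hG p h le_rfl).le

def chainGraph (P : Finset α) (τ : ℝ) : SimpleGraph α :=
  SimpleGraph.fromRel fun x y => x ∈ P ∧ y ∈ P ∧ dist x y < τ

variable {P : Finset α} {τ : ℝ}

theorem chainGraph_adj {x y : α} :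
    (chainGraph P τ).Adj x y ↔ x ≠ y ∧ x ∈ P ∧ y ∈ P ∧ dist x y < τ := by
  simp only [chainGraph, SimpleGraph.fromRel_adj, dist_comm y x]
  tauto

theorem chainRel_iff_reachable {x y : α} :
    ChainRel P τ x y ↔ (chainGraph P τ).Reachable x y := by
  rw [SimpleGraph.reachable_iff_reflTransGen]
  constructor
  · intro h
    induction h with
    | refl => rfl
    | @tail b c _ hbc ih =>
      rcases eq_or_ne b c with rfl | hne
      · exact ih
      · exact ih.tail (chainGraph_adj.2 ⟨hne, hbc⟩)
  · exact Relation.ReflTransGen.mono (fun _ _ h => (chainGraph_adj.1 h).2) _ _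

theorem length_le_of_isPath_chainGraph {m : ℕ} {μ : ℝ} {F : Fin (m + 1) → Finset α}
    (hτ : 0 ≤ τ) (hτμ : (m + 1) * τ ≤ μ) (hF : ∀ j, Separated μ (F j))
    (hPF : ∀ x ∈ P, ∃ j, x ∈ F j) {u v : α} {p : (chainGraph P τ).Walk u v} (hp : p.IsPath) :
    p.length ≤ m := by
  by_contra! hlen
  have hP : ∀ i ≤ p.length, p.getVert i ∈ P := by
    intro i hi
    obtain ⟨j, hj, rfl | rfl⟩ : ∃ j < p.length, i = j ∨ i = j + 1 :=
      ⟨min i (p.length - 1), by omega, by omega⟩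
    · exact (chainGraph_adj.1 (p.adj_getVert_succ hj)).2.1
    · exact (chainGraph_adj.1 (p.adj_getVert_succ hj)).2.2.1
  have hmem : ∀ i : Fin (m + 2), ∃ j, p.getVert i ∈ F j := fun i => hPF _ (hP i (by omega))
  choose lab hlab using hmem
  obtain ⟨i, i', hne, heq⟩ := Fintype.exists_ne_map_eq_of_card_lt lab (by simp)
  wlog hlt : i < i' generalizing i i'
  · exact this i' i hne.symm heq.symm (lt_of_le_of_ne (not_lt.1 hlt) hne.symm)
  have hsep : μ ≤ dist (p.getVert i) (p.getVert i') :=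
    hF _ _ (hlab i) _ (heq ▸ hlab i') fun h => hne (Fin.ext (hp.getVert_injOn
      (by simp only [Set.mem_ofPred_eq]; omega) (by simp only [Set.mem_ofPred_eq]; omega) h))
  have hclose := dist_getVert_lt (fun x y h => (chainGraph_adj.1 h).2.2.2) p
    (Fin.lt_def.1 hlt) (by omega)
  have hgap : ((i' : ℕ) - (i : ℕ) : ℝ) ≤ m + 1 := by
    have : ((i' : ℕ) : ℝ) ≤ m + 1 := by exact_mod_cast Nat.lt_succ_iff.1 i'.isLt
    linarith [(i : ℕ).cast_nonneg (α := ℝ)]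
  nlinarith

theorem dist_le_of_reachable_chainGraph {m : ℕ} {μ : ℝ} {F : Fin (m + 1) → Finset α}
    (hτ : 0 ≤ τ) (hτμ : (m + 1) * τ ≤ μ) (hF : ∀ j, Separated μ (F j))
    (hPF : ∀ x ∈ P, ∃ j, x ∈ F j) {x y : α} (h : (chainGraph P τ).Reachable x y) :
    dist x y ≤ m * τ := by
  obtain ⟨p, hp⟩ := h.exists_isPath
  calc dist x y ≤ p.length * τ := dist_le_length_mul (fun _ _ h => (chainGraph_adj.1 h).2.2.2) p
    _ ≤ m * τ := by gcongr; exact_mod_cast length_le_of_isPath_chainGraph hτ hτμ hF hPF hp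

end Metric

section Finsets

omit [MetricSpace α]

theorem exists_mem_cons_of_mem_union_biUnion {m : ℕ} {S₀ : Finset α} {Sg : Fin m → Finset α}
    {x : α} (hx : x ∈ S₀ ∪ univ.biUnion Sg) :
    ∃ j, x ∈ (Fin.cons S₀ Sg : Fin (m + 1) → Finset α) j := by
  rcases mem_union.1 hx with h | h
  · exact ⟨0, h⟩
  · obtain ⟨i, -, hi⟩ := mem_biUnion.1 h
    exact ⟨i.succ, by simpa using hi⟩

theorem card_eq_sum_card_inter {ι : Type*} [Fintype ι] {Xg : ι → Finset α}
    (hdisj : ∀ i j, i ≠ j → Disjoint (Xg i) (Xg j)) {T : Finset α} (hT : T ⊆ univ.biUnion Xg) :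
    #T = ∑ i, #(T ∩ Xg i) := by
  rw [← card_biUnion fun i _ j _ hij => (hdisj i j hij).mono inter_subset_right inter_subset_right,
    ← inter_biUnion, inter_eq_left.2 hT]

theorem card_image_inter_eq_of_mem_iff {ι : Type*} {s : Finset ι} {f g : ι → α}
    (hf : Set.InjOn f s) (hg : Set.InjOn g s) {A : Finset α} (hfg : ∀ i ∈ s, f i ∈ A ↔ g i ∈ A) :
    #(s.image f ∩ A) = #(s.image g ∩ A) := by
  rw [← filter_mem_eq_inter, ← filter_mem_eq_inter, filter_image, filter_image,
    card_image_of_injOn (hf.mono (coe_subset.2 (filter_subset _ _))),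
    card_image_of_injOn (hg.mono (coe_subset.2 (filter_subset _ _))), filter_congr hfg]

end Finsets

theorem Finset.exists_injective_forall_mem_of_card_le_or_injOn {ι β : Type*} [Fintype ι]
    [DecidableEq β] (t : ι → Finset β) (A : Set ι) (r : ι → β) (hr : ∀ i ∈ A, r i ∈ t i)
    (hrA : Set.InjOn r A) (hlarge : ∀ i ∉ A, Fintype.card ι ≤ #(t i)) :
    ∃ f : ι → β, Function.Injective f ∧ ∀ i, f i ∈ t i := by
  refine (all_card_le_biUnion_card_iff_exists_injective t).1 fun s => ?_
  by_cases hs : ∃ i ∈ s, i ∉ A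
  · obtain ⟨i, his, hiA⟩ := hs
    calc #s ≤ Fintype.card ι := card_le_univ s
      _ ≤ #(t i) := hlarge i hiA
      _ ≤ #(s.biUnion t) := card_le_card (subset_biUnion_of_mem t his)
  · push Not at hs
    exact card_le_card_of_injOn r (fun i hi => mem_biUnion.2 ⟨i, hi, hr i (hs i hi)⟩)
      (hrA.mono fun i hi => hs i hi)

theorem exists_injOn_subset_biUnion_of_far_apart {ι β : Type*} [Fintype ι] (c : α → β)
    {D μ : ℝ} (hD : D < μ) (hc : ∀ s s', c s = c s' → dist s s' ≤ D)
    {Xg Sg : ι → Finset α} (hdisj : ∀ i j, i ≠ j → Disjoint (Xg i) (Xg j))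
    (hSX : ∀ i, Sg i ⊆ Xg i) (hSsep : ∀ i, Separated μ (Sg i))
    {T : Finset α} (hTX : T ⊆ univ.biUnion Xg)
    (hnear : ∀ i, #(Sg i) < #T → ∀ x ∈ Xg i, ∃ s ∈ Sg i, dist x s < μ)
    (hTfar : ∀ x ∈ T, ∀ y ∈ T, x ≠ y → 2 * μ + D ≤ dist x y) :
    ∃ S ⊆ univ.biUnion Sg, (∀ i, #(S ∩ Xg i) = #(T ∩ Xg i)) ∧ Set.InjOn c S ∧ #S = #T := by
  classical
  have hgroup : ∀ {x i j}, x ∈ Xg i → (x ∈ Xg j ↔ i = j) := fun hi =>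
    ⟨fun hj => by_contra fun hij => disjoint_left.1 (hdisj _ _ hij) hi hj, fun h => h ▸ hi⟩
  have hinj : ∀ i, Set.InjOn c (Sg i) := fun i s hs s' hs' h => by_contra fun hne =>
    (hSsep i s hs s' hs' hne).not_gt ((hc s s' h).trans_lt hD)
  choose grp hgrp using fun x : T => (mem_biUnion.1 (hTX x.2)).imp fun _ h => h.2
  have hnear' : ∀ x : T, ∃ s, #(Sg (grp x)) < #T → s ∈ Sg (grp x) ∧ dist (x : α) s < μ := by
    intro x
    by_cases h : #(Sg (grp x)) < #T
    · obtain ⟨s, hs, hd⟩ := hnear _ h x (hgrp x)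
      exact ⟨s, fun _ => ⟨hs, hd⟩⟩
    · exact ⟨x, fun h' => absurd h' h⟩
  choose near hnearS using hnear'
  have hnear_injOn : Set.InjOn (fun x => c (near x)) {x | #(Sg (grp x)) < #T} := by
    intro x hx y hy h
    by_contra hxy
    have hfar := hTfar x x.2 y y.2 (Subtype.coe_ne_coe.2 hxy)
    have htri := dist_triangle4 (x : α) (near x) (near y) y
    rw [dist_comm (near y)] at htri
    linarith [hc _ _ h, (hnearS x hx).2, (hnearS y hy).2]
  obtain ⟨f, hf, hft⟩ := exists_injective_forall_mem_of_card_le_or_injOn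
    (fun x : T => (Sg (grp x)).image c) _ _
    (fun x hx => mem_image_of_mem c (hnearS x hx).1) hnear_injOn
    (fun x hx => by rw [Fintype.card_coe, card_image_of_injOn (hinj _)]; exact not_lt.1 hx)
  choose g hgS hgc using fun x => mem_image.1 (hft x)
  have hg : Function.Injective g := fun x y h => hf (by rw [← hgc, ← hgc, h])
  refine ⟨T.attach.image g, ?_, fun i => ?_, ?_, ?_⟩
  · exact image_subset_iff.2 fun x _ => mem_biUnion.2 ⟨_, mem_univ _, hgS x⟩
  · refine (card_image_inter_eq_of_mem_iff hg.injOn Subtype.val_injective.injOn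
      fun x _ => ?_).trans (by rw [attach_image_val])
    exact (hgroup (hSX _ (hgS x))).trans (hgroup (hgrp x)).symm
  · simp only [Set.InjOn, coe_image, Set.forall_mem_image, hgc]
    exact fun x _ y _ h => congrArg g (hf h)
  · rw [card_image_of_injective _ hg, card_attach]

theorem stmt_9_general (X : Finset α) (m : ℕ)
    (Xg : Fin m → Finset α) (kg : Fin m → ℕ) (μ : ℝ)
    (hcover : X = Finset.univ.biUnion Xg)
    (hdisj : ∀ i j, i ≠ j → Disjoint (Xg i) (Xg j))
    (hk2 : 2 ≤ ∑ i, kg i) (hμ : 0 < μ)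
    (S₀ : Finset α)
    (hS₀ : S₀ ⊆ X ∧ Separated μ S₀ ∧ S₀.card = ∑ i, kg i)
    (Sg : Fin m → Finset α)
    (hSg : ∀ i, Sg i ⊆ Xg i ∧ Separated μ (Sg i) ∧
      kg i ≤ (Sg i).card ∧ (Sg i).card ≤ ∑ j, kg j ∧
      ((Sg i).card < ∑ j, kg j → ∀ x ∈ Xg i, ∃ s ∈ Sg i, dist x s < μ))
    (T : Finset α)
    (hT : T ⊆ X ∧ (∀ i, (T ∩ Xg i).card = kg i) ∧
      (3 * (m : ℝ) + 2) / ((m : ℝ) + 1) * μ ≤ divers T) :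
    ∃ S ⊆ S₀ ∪ Finset.univ.biUnion Sg,
      (∀ i, (S ∩ Xg i).card = kg i) ∧
      (∀ x ∈ S, ∀ y ∈ S, x ≠ y →
        ¬ ChainRel (S₀ ∪ Finset.univ.biUnion Sg) (μ / ((m : ℝ) + 1)) x y) ∧
      S.card = ∑ i, kg i ∧
      μ / ((m : ℝ) + 1) ≤ divers S := by
  obtain ⟨hTX, hTcard, hTdiv⟩ := hT
  set τ := μ / ((m : ℝ) + 1) with hτ_def
  set P := S₀ ∪ univ.biUnion Sg
  have hτ : 0 < τ := by positivity
  have hτμ : ((m : ℝ) + 1) * τ = μ := by rw [hτ_def]; field_simp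
  have hchain : ∀ x y, (chainGraph P τ).Reachable x y → dist x y ≤ m * τ := fun x y =>
    dist_le_of_reachable_chainGraph hτ.le hτμ.le (Fin.cases hS₀.2.1 fun i => (hSg i).2.1)
      fun _ => exists_mem_cons_of_mem_union_biUnion
  have hTk : #T = ∑ i, kg i :=
    (card_eq_sum_card_inter hdisj (hcover ▸ hTX)).trans (sum_congr rfl fun i _ => hTcard i)
  have hfar : (3 * (m : ℝ) + 2) / ((m : ℝ) + 1) * μ = 2 * μ + m * τ := by
    rw [hτ_def]; field_simp; ring
  obtain ⟨S, hSP, hSX, hSinj, hScard⟩ := exists_injOn_subset_biUnion_of_far_apart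
    (chainGraph P τ).connectedComponentMk (by linarith)
    (fun s s' h => hchain s s' (SimpleGraph.ConnectedComponent.eq.1 h))
    hdisj (fun i => (hSg i).1) (fun i => (hSg i).2.1) (hcover ▸ hTX)
    (fun i h => (hSg i).2.2.2.2 (hTk ▸ h))
    (fun x hx y hy hxy => hfar ▸ hTdiv.trans (divers_le_dist hx hy hxy))
  replace hSP : S ⊆ P := hSP.trans subset_union_right
  have hindep : ∀ x ∈ S, ∀ y ∈ S, x ≠ y → ¬ ChainRel P τ x y := fun x hx y hy hxy h =>
    hxy (hSinj hx hy (SimpleGraph.ConnectedComponent.eq.2 (chainRel_iff_reachable.1 h)))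
  refine ⟨S, hSP, fun i => (hSX i).trans (hTcard i), hindep, hScard.trans hTk,
    le_divers (by omega) fun x hx y hy hxy => not_lt.1 fun h => ?_⟩
  exact hindep x hx y hy hxy (.single ⟨hSP hx, hSP hy, h⟩)

/-- Lemma 4: existence of a size-`k` common independent set of the fairness partition
matroid and the cluster partition matroid, provided a fair set of diversity at least
`((3m+2)/(m+1))·μ` exists. -/
theorem stmt_9 (X : Finset α) (m : ℕ) (hm : 1 ≤ m)
    (Xg : Fin m → Finset α) (kg : Fin m → ℕ) (μ : ℝ)
    (hcover : X = Finset.univ.biUnion Xg)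
    (hdisj : ∀ i j, i ≠ j → Disjoint (Xg i) (Xg j))
    (hne : ∀ i, (Xg i).Nonempty)
    (hkg : ∀ i, 1 ≤ kg i) (hk2 : 2 ≤ ∑ i, kg i) (hμ : 0 < μ)
    (S₀ : Finset α)
    (hS₀ : S₀ ⊆ X ∧ Separated μ S₀ ∧ S₀.card = ∑ i, kg i)
    (Sg : Fin m → Finset α)
    (hSg : ∀ i, Sg i ⊆ Xg i ∧ Separated μ (Sg i) ∧
      kg i ≤ (Sg i).card ∧ (Sg i).card ≤ ∑ j, kg j ∧
      ((Sg i).card < ∑ j, kg j → ∀ x ∈ Xg i, ∃ s ∈ Sg i, dist x s < μ))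
    (T : Finset α)
    (hT : T ⊆ X ∧ (∀ i, (T ∩ Xg i).card = kg i) ∧
      (3 * (m : ℝ) + 2) / ((m : ℝ) + 1) * μ ≤ divers T) :
    ∃ S ⊆ S₀ ∪ Finset.univ.biUnion Sg,
      (∀ i, (S ∩ Xg i).card = kg i) ∧
      (∀ x ∈ S, ∀ y ∈ S, x ≠ y →
        ¬ ChainRel (S₀ ∪ Finset.univ.biUnion Sg) (μ / ((m : ℝ) + 1)) x y) ∧
      S.card = ∑ i, kg i ∧
      μ / ((m : ℝ) + 1) ≤ divers S :=
  stmt_9_general X m Xg kg μ hcover hdisj hk2 hμ S₀ hS₀ Sg hSg T hT
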